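/- arXiv:cs/0509024 — 13 statements merged into one kernel-verified Lean document; each statement's English description precedes it below -/
import Mathlib

section
/- Let L be a complete lattice, O : L → L an operator, and A an approximating operator of O. If x is an exact stable fixpoint of A, then x is a minimal pre-fixpoint of O; that is, for every y ∈ L with O(y) ≤ y and y ≤ x, it holds that y = x. -/
/-- An exact stable fixpoint of an approximating operator `A` of `O`
is a minimal pre-fixpoint of `O`. -/
theorem stmt_0 {L : Type*} [CompleteLattice L] (O : L → L) (A : L × L → L × L)
    (hmono : ∀ p q : L × L, p.1 ≤ q.1 → q.2 ≤ p.2 →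
      (A p).1 ≤ (A q).1 ∧ (A q).2 ≤ (A p).2)
    (hcons : ∀ p : L × L, p.1 ≤ p.2 → (A p).1 ≤ (A p).2)
    (hext : ∀ x : L, A (x, x) = (O x, O x))
    (x : L) (hfix : O x = x)
    (hstable : IsLeast {z : L | (A (z, x)).1 = z} x) :
    ∀ y : L, O y ≤ y → y ≤ x → y = x := by
  intro y hOy hyx
  set f : L →o L := ⟨fun z => (A (z, x)).1, fun a b hab =>
    (hmono (a, x) (b, x) hab le_rfl).1⟩ with hf
  have hfy : f y ≤ y := by
    have h1 : (A (y, x)).1 ≤ (A (y, y)).1 := (hmono (y, x) (y, y) le_rfl hyx).1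
    have h2 : (A (y, y)).1 = O y := by rw [hext y]
    calc f y = (A (y, x)).1 := rfl
      _ ≤ (A (y, y)).1 := h1
      _ = O y := h2
      _ ≤ y := hOy
  have hwfix : f (OrderHom.lfp f) = OrderHom.lfp f := OrderHom.map_lfp f
  have hxw : x ≤ OrderHom.lfp f := hstable.2 hwfix
  have hwy : OrderHom.lfp f ≤ y := OrderHom.lfp_le f hfy
  exact le_antisymm hyx (le_trans hxw hwy)
end

section
/- Let L be a complete lattice, O : L → L an operator, and A an approximating operator of O. For every consistent pair (x,y) (i.e., x ≤ y) and every z with x ≤ z ≤ y, it holds that A¹(x,y) ≤ O(z) and O(z) ≤ A²(x,y). Consequently A¹(x,y) ≤ inf{O(z) | x ≤ z ≤ y} and sup{O(z) | x ≤ z ≤ y} ≤ A²(x,y); that is, A is less precise than the ultimate approximation U_O of O, so U_O is the most precise approximating operator of O. -/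
/-- Any approximating operator `A` of `O` bounds `O` on intervals,
hence is less precise than the ultimate approximation of `O`. -/
theorem stmt_1 {L : Type*} [CompleteLattice L] (O : L → L) (A : L × L → L × L)
    (hmono : ∀ p q : L × L, p.1 ≤ q.1 → q.2 ≤ p.2 →
      (A p).1 ≤ (A q).1 ∧ (A q).2 ≤ (A p).2)
    (hcons : ∀ p : L × L, p.1 ≤ p.2 → (A p).1 ≤ (A p).2)
    (hext : ∀ x : L, A (x, x) = (O x, O x))
    (x y : L) (hxy : x ≤ y) :
    (∀ z : L, x ≤ z → z ≤ y → (A (x, y)).1 ≤ O z ∧ O z ≤ (A (x, y)).2) ∧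
    (A (x, y)).1 ≤ sInf (O '' Set.Icc x y) ∧
    sSup (O '' Set.Icc x y) ≤ (A (x, y)).2 := by
  have key : ∀ z : L, x ≤ z → z ≤ y → (A (x, y)).1 ≤ O z ∧ O z ≤ (A (x, y)).2 := by
    intro z hxz hzy
    have h := hmono (x, y) (z, z) hxz hzy
    rw [hext z] at h
    exact h
  refine ⟨key, le_sInf ?_, sSup_le ?_⟩ <;>
    rintro w ⟨z, ⟨hxz, hzy⟩, rfl⟩
  · exact (key z hxz hzy).1
  · exact (key z hxz hzy).2
end

section
/- Let L be a complete lattice, O : L → L an operator, and A, B approximating operators of O such that A ≤ₚ B, i.e., for every consistent pair (x,y), A¹(x,y) ≤ B¹(x,y) and B²(x,y) ≤ A²(x,y). Then every exact stable fixpoint of A is an exact stable fixpoint of B: if O(x) = x and x is the least fixpoint of z ↦ A¹(z,x), then x is the least fixpoint of z ↦ B¹(z,x). -/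
/-- If `A ≤ₚ B` are approximating operators of `O`, every exact stable
fixpoint of `A` is an exact stable fixpoint of `B`. -/
theorem stmt_3 {L : Type*} [CompleteLattice L] (O : L → L) (A B : L × L → L × L)
    (hAmono : ∀ p q : L × L, p.1 ≤ q.1 → q.2 ≤ p.2 →
      (A p).1 ≤ (A q).1 ∧ (A q).2 ≤ (A p).2)
    (hAcons : ∀ p : L × L, p.1 ≤ p.2 → (A p).1 ≤ (A p).2)
    (hAext : ∀ x : L, A (x, x) = (O x, O x))
    (hBmono : ∀ p q : L × L, p.1 ≤ q.1 → q.2 ≤ p.2 →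
      (B p).1 ≤ (B q).1 ∧ (B q).2 ≤ (B p).2)
    (hBcons : ∀ p : L × L, p.1 ≤ p.2 → (B p).1 ≤ (B p).2)
    (hBext : ∀ x : L, B (x, x) = (O x, O x))
    (hprec : ∀ p : L × L, p.1 ≤ p.2 → (A p).1 ≤ (B p).1 ∧ (B p).2 ≤ (A p).2)
    (x : L) (hfix : O x = x)
    (hA : IsLeast {z : L | (A (z, x)).1 = z} x) :
    IsLeast {z : L | (B (z, x)).1 = z} x := by
  constructor
  · show (B (x, x)).1 = x
    rw [hBext x, hfix]
  · intro z hz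
    -- f z = A¹(z, x) is monotone
    set f : L →o L := ⟨fun w => (A (w, x)).1,
      fun a b hab => (hAmono (a, x) (b, x) hab le_rfl).1⟩ with hf
    have hfx : f x = x := by
      show (A (x, x)).1 = x
      rw [hAext x, hfix]
    have hlfp_le_x : OrderHom.lfp f ≤ x := OrderHom.lfp_le f (le_of_eq hfx)
    have hx_le_lfp : x ≤ OrderHom.lfp f := hA.2 (OrderHom.map_lfp f)
    have hxlfp : x = OrderHom.lfp f := le_antisymm hx_le_lfp hlfp_le_x
    -- w = z ⊓ x is a prefixpoint of f
    have hwcons : z ⊓ x ≤ x := inf_le_right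
    have h1 : (A (z ⊓ x, x)).1 ≤ (B (z ⊓ x, x)).1 := (hprec (z ⊓ x, x) hwcons).1
    have h2 : (B (z ⊓ x, x)).1 ≤ (B (z, x)).1 :=
      (hBmono (z ⊓ x, x) (z, x) inf_le_left le_rfl).1
    have h3 : (A (z ⊓ x, x)).1 ≤ (A (x, x)).1 :=
      (hAmono (z ⊓ x, x) (x, x) inf_le_right le_rfl).1
    have hpre : f (z ⊓ x) ≤ z ⊓ x := by
      refine le_inf ?_ ?_
      · exact le_trans h1 (le_trans h2 (le_of_eq hz))
      · exact le_trans h3 (le_of_eq hfx)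
    have := OrderHom.lfp_le f hpre
    calc x = OrderHom.lfp f := hxlfp
      _ ≤ z ⊓ x := this
      _ ≤ z := inf_le_left
end

section
/- Let L be a complete lattice, O : L → L an operator, and A an approximating operator of O. If x is an exact stable fixpoint of A, then x is an ultimate exact stable fixpoint of O; that is, O(x) = x and x is the least fixpoint of the monotone map z ↦ inf{O(w) | z ≤ w ≤ x} (where the infimum of the empty set is ⊤). Hence the set of ultimate exact stable fixpoints of O includes all exact stable fixpoints of all approximating operators of O. -/
/-- An exact stable fixpoint of any approximating operator `A` of `O`
is an ultimate exact stable fixpoint of `O`. -/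
theorem stmt_4 {L : Type*} [CompleteLattice L] (O : L → L) (A : L × L → L × L)
    (hmono : ∀ p q : L × L, p.1 ≤ q.1 → q.2 ≤ p.2 →
      (A p).1 ≤ (A q).1 ∧ (A q).2 ≤ (A p).2)
    (hcons : ∀ p : L × L, p.1 ≤ p.2 → (A p).1 ≤ (A p).2)
    (hext : ∀ x : L, A (x, x) = (O x, O x))
    (x : L) (hfix : O x = x)
    (hstable : IsLeast {z : L | (A (z, x)).1 = z} x) :
    O x = x ∧ IsLeast {z : L | sInf (O '' Set.Icc z x) = z} x := by
  refine ⟨hfix, ⟨?_, ?_⟩⟩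
  · show sInf (O '' Set.Icc x x) = x
    rw [Set.Icc_self, Set.image_singleton, sInf_singleton, hfix]
  · intro z hz
    simp only [Set.mem_setOf_eq] at hz
    by_cases hzx : z ≤ x
    · -- A¹(z,x) ≤ O w for all w ∈ Icc z x, hence A¹(z,x) ≤ z
      have hpre : (A (z, x)).1 ≤ z := by
        have : (A (z, x)).1 ≤ sInf (O '' Set.Icc z x) := by
          apply le_sInf
          rintro _ ⟨w, ⟨hw1, hw2⟩, rfl⟩
          have h := (hmono (z, x) (w, w) hw1 hw2).1
          rwa [hext w] at h
        rwa [hz] at this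
      -- the monotone map g z = A¹(z,x)
      set g : L →o L := ⟨fun y => (A (y, x)).1,
        fun a b hab => (hmono (a, x) (b, x) hab le_rfl).1⟩ with hg
      have hxle : x ≤ OrderHom.lfp g := hstable.2 (g.isFixedPt_lfp)
      exact hxle.trans (OrderHom.lfp_le g hpre)
    · have : Set.Icc z x = ∅ := by
        rw [Set.Icc_eq_empty_iff]
        exact hzx
      rw [this, Set.image_empty, sInf_empty] at hz
      rw [← hz]
      exact le_top
end

section
/- Let R ⊆ 𝒫(D₁) × D₂ be an aggregate relation. Then the ultimate approximating aggregate ult(R), defined by ult(R)¹((S₁,S₂),d) iff (S,d) ∈ R for all S with S₁ ⊆ S ⊆ S₂, and ult(R)²((S₁,S₂),d) iff (S,d) ∈ R for some S with S₁ ⊆ S ⊆ S₂, is a three-valued aggregate relation, and ult(R) approximates R. -/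
/-- A three-valued aggregate relation, given by its two components `R1 ⊆ R2` on
three-valued sets `(S₁,S₂)` with `S₁ ⊆ S₂`: `R1 ⊆ R2` on consistent pairs,
`≤ₚ`-monotonicity, and exactness on exact pairs. -/
def IsTVAggRel {D₁ D₂ : Type*} (R1 R2 : Set D₁ → Set D₁ → D₂ → Prop) : Prop :=
  (∀ (S₁ S₂ : Set D₁) (d : D₂), S₁ ⊆ S₂ → R1 S₁ S₂ d → R2 S₁ S₂ d) ∧
  (∀ (S₁ S₂ T₁ T₂ : Set D₁) (d : D₂), S₁ ⊆ S₂ → T₁ ⊆ T₂ → S₁ ⊆ T₁ → T₂ ⊆ S₂ →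
    ((R1 S₁ S₂ d → R1 T₁ T₂ d) ∧ (R2 T₁ T₂ d → R2 S₁ S₂ d))) ∧
  (∀ (S : Set D₁) (d : D₂), R1 S S d ↔ R2 S S d)

/-- A three-valued aggregate relation (first component) approximates an aggregate
relation `R` if it coincides with `R` on exact pairs. -/
def TVApproximates {D₁ D₂ : Type*} (R1 : Set D₁ → Set D₁ → D₂ → Prop)
    (R : Set D₁ → D₂ → Prop) : Prop :=
  ∀ (S : Set D₁) (d : D₂), R1 S S d ↔ R S d

/-- The ultimate approximating aggregate `ult(R)` is a three-valued
aggregate relation and it approximates `R`. -/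
theorem stmt_8 {D₁ D₂ : Type*} (R : Set D₁ → D₂ → Prop) :
    IsTVAggRel (fun S₁ S₂ d => ∀ S : Set D₁, S₁ ⊆ S → S ⊆ S₂ → R S d)
               (fun S₁ S₂ d => ∃ S : Set D₁, S₁ ⊆ S ∧ S ⊆ S₂ ∧ R S d) ∧
    TVApproximates (fun S₁ S₂ d => ∀ S : Set D₁, S₁ ⊆ S → S ⊆ S₂ → R S d) R := by
  refine ⟨⟨fun S₁ S₂ d h h1 => ⟨S₁, subset_rfl, h, h1 S₁ subset_rfl h⟩,
    fun S₁ S₂ T₁ T₂ d hS hT hST hTS =>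
      ⟨fun h1 S h2 h3 => h1 S (hST.trans h2) (h3.trans hTS),
       fun ⟨S, h2, h3, hR⟩ => ⟨S, hST.trans h2, h3.trans hTS, hR⟩⟩,
    fun S d => ⟨fun h => ⟨S, subset_rfl, subset_rfl, h S subset_rfl subset_rfl⟩,
      fun ⟨T, h1, h2, hR⟩ U h3 h4 => ((h2.antisymm h1).trans (h3.antisymm h4)) ▸ hR⟩⟩,
    fun S d => ⟨fun h => h S subset_rfl subset_rfl,
      fun h U h1 h2 => by rwa [h2.antisymm h1]⟩⟩
end

section
/- Let R ⊆ 𝒫(D₁) × D₂ be an aggregate relation. The ultimate approximating aggregate ult(R) is the most precise three-valued aggregate relation approximating R: for every three-valued aggregate relation ℛ approximating R, ℛ ≤ₚ ult(R); concretely, for every three-valued set (S₁,S₂) and every d ∈ D₂, ℛ¹((S₁,S₂),d) implies that (S,d) ∈ R for all S with S₁ ⊆ S ⊆ S₂, and the existence of some S with S₁ ⊆ S ⊆ S₂ and (S,d) ∈ R implies ℛ²((S₁,S₂),d). -/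
/-- The ultimate approximating aggregate `ult(R)` is the most precise
three-valued aggregate relation approximating `R`. -/
theorem stmt_9 {D₁ D₂ : Type*} (R : Set D₁ → D₂ → Prop)
    (R1 R2 : Set D₁ → Set D₁ → D₂ → Prop)
    (h : IsTVAggRel R1 R2) (happ : TVApproximates R1 R) :
    ∀ (S₁ S₂ : Set D₁) (d : D₂), S₁ ⊆ S₂ →
      (R1 S₁ S₂ d → ∀ S : Set D₁, S₁ ⊆ S → S ⊆ S₂ → R S d) ∧
      ((∃ S : Set D₁, S₁ ⊆ S ∧ S ⊆ S₂ ∧ R S d) → R2 S₁ S₂ d) := by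
  obtain ⟨_, hmono, hexact⟩ := h
  intro S₁ S₂ d hsub
  constructor
  · intro h1 S hS₁ hS₂
    exact (happ S d).mp ((hmono S₁ S₂ S S d hsub subset_rfl hS₁ hS₂).1 h1)
  · rintro ⟨S, hS₁, hS₂, hR⟩
    exact (hmono S₁ S₂ S S d hsub subset_rfl hS₁ hS₂).2
      ((hexact S d).mp ((happ S d).mpr hR))
end

section
/- Let D be a partially ordered set, let Min(S,d) mean that d ∈ S and d is a minimal element of S (there is no d' ∈ S with d' < d), and let Max(S,d) mean that d ∈ S and d is a maximal element of S. Then for all subsets S₁ ⊆ S₂ of D and every d ∈ D: (Min(S,d) holds for all S with S₁ ⊆ S ⊆ S₂) iff (d ∈ S₁ and Min(S₂,d)); (Min(S,d) holds for some S with S₁ ⊆ S ⊆ S₂) iff (d ∈ S₂ and there is no d' ∈ S₁ with d' < d); (Max(S,d) holds for all S with S₁ ⊆ S ⊆ S₂) iff (d ∈ S₁ and Max(S₂,d)); and (Max(S,d) holds for some S with S₁ ⊆ S ⊆ S₂) iff (d ∈ S₂ and there is no d' ∈ S₁ with d' > d). -/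
/-- `MinRel S d`: `d` is a minimal element of `S`. -/
def MinRel {D : Type*} [PartialOrder D] (S : Set D) (d : D) : Prop :=
  d ∈ S ∧ ∀ d' ∈ S, ¬ d' < d

/-- `MaxRel S d`: `d` is a maximal element of `S`. -/
def MaxRel {D : Type*} [PartialOrder D] (S : Set D) (d : D) : Prop :=
  d ∈ S ∧ ∀ d' ∈ S, ¬ d < d'

/-- Characterization of the ultimate approximating aggregates of
the `Min` and `Max` aggregate relations. -/
theorem stmt_12 {D : Type*} [PartialOrder D] (S₁ S₂ : Set D) (h : S₁ ⊆ S₂) (d : D) :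
    ((∀ S : Set D, S₁ ⊆ S → S ⊆ S₂ → MinRel S d) ↔ (d ∈ S₁ ∧ MinRel S₂ d)) ∧
    ((∃ S : Set D, S₁ ⊆ S ∧ S ⊆ S₂ ∧ MinRel S d) ↔ (d ∈ S₂ ∧ ¬ ∃ d' ∈ S₁, d' < d)) ∧
    ((∀ S : Set D, S₁ ⊆ S → S ⊆ S₂ → MaxRel S d) ↔ (d ∈ S₁ ∧ MaxRel S₂ d)) ∧
    ((∃ S : Set D, S₁ ⊆ S ∧ S ⊆ S₂ ∧ MaxRel S d) ↔ (d ∈ S₂ ∧ ¬ ∃ d' ∈ S₁, d < d')) := by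
  refine ⟨⟨fun H => ⟨(H S₁ subset_rfl h).1, H S₂ h subset_rfl⟩,
      fun ⟨h1, _, h2⟩ S hS1 hS2 => ⟨hS1 h1, fun d' hd' => h2 d' (hS2 hd')⟩⟩,
    ⟨fun ⟨S, hS1, hS2, hd, hmin⟩ => ⟨hS2 hd, fun ⟨d', hd', hlt⟩ => hmin d' (hS1 hd') hlt⟩,
      fun ⟨hd2, hno⟩ => ⟨S₁ ∪ {d}, Set.subset_union_left,
        Set.union_subset h (Set.singleton_subset_iff.mpr hd2), Or.inr rfl,
        fun d' hd' hlt => hd'.elim (fun h1 => hno ⟨d', h1, hlt⟩)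
          (fun he => absurd hlt (by simp only [Set.mem_singleton_iff] at he; simp [he]))⟩⟩,
    ⟨fun H => ⟨(H S₁ subset_rfl h).1, H S₂ h subset_rfl⟩,
      fun ⟨h1, _, h2⟩ S hS1 hS2 => ⟨hS1 h1, fun d' hd' => h2 d' (hS2 hd')⟩⟩,
    ⟨fun ⟨S, hS1, hS2, hd, hmax⟩ => ⟨hS2 hd, fun ⟨d', hd', hlt⟩ => hmax d' (hS1 hd') hlt⟩,
      fun ⟨hd2, hno⟩ => ⟨S₁ ∪ {d}, Set.subset_union_left,
        Set.union_subset h (Set.singleton_subset_iff.mpr hd2), Or.inr rfl,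
        fun d' hd' hlt => hd'.elim (fun h1 => hno ⟨d', h1, hlt⟩)
          (fun he => absurd hlt (by simp only [Set.mem_singleton_iff] at he; simp [he]))⟩⟩⟩
end

section
/- Let L be a complete lattice. Then for all subsets S₁ ⊆ S₂ of L and every d ∈ L: (inf S = d for all S with S₁ ⊆ S ⊆ S₂) iff (inf S₁ = d and inf S₂ = d); (inf S = d for some S with S₁ ⊆ S ⊆ S₂) iff inf(S₁ ∪ (S₂ ∩ [d,⊤])) = d; (sup S = d for all S with S₁ ⊆ S ⊆ S₂) iff (sup S₁ = d and sup S₂ = d); and (sup S = d for some S with S₁ ⊆ S ⊆ S₂) iff sup(S₁ ∪ (S₂ ∩ [⊥,d])) = d. -/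
/-- Characterization of the ultimate approximating aggregates of
the `Glb` (infimum) and `Lub` (supremum) aggregate relations in a complete lattice. -/
theorem stmt_13 {L : Type*} [CompleteLattice L] (S₁ S₂ : Set L) (h : S₁ ⊆ S₂) (d : L) :
    ((∀ S : Set L, S₁ ⊆ S → S ⊆ S₂ → sInf S = d) ↔ (sInf S₁ = d ∧ sInf S₂ = d)) ∧
    ((∃ S : Set L, S₁ ⊆ S ∧ S ⊆ S₂ ∧ sInf S = d) ↔ sInf (S₁ ∪ (S₂ ∩ Set.Ici d)) = d) ∧
    ((∀ S : Set L, S₁ ⊆ S → S ⊆ S₂ → sSup S = d) ↔ (sSup S₁ = d ∧ sSup S₂ = d)) ∧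
    ((∃ S : Set L, S₁ ⊆ S ∧ S ⊆ S₂ ∧ sSup S = d) ↔ sSup (S₁ ∪ (S₂ ∩ Set.Iic d)) = d) := by
  refine ⟨⟨fun h1 => ⟨h1 S₁ subset_rfl h, h1 S₂ h subset_rfl⟩,
      fun ⟨h1, h2⟩ S hS1 hS2 => le_antisymm (h1 ▸ sInf_le_sInf hS1) (h2 ▸ sInf_le_sInf hS2)⟩,
    ⟨?_, fun hT => ⟨S₁ ∪ (S₂ ∩ Set.Ici d), Set.subset_union_left,
      Set.union_subset h Set.inter_subset_left, hT⟩⟩,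
    ⟨fun h1 => ⟨h1 S₁ subset_rfl h, h1 S₂ h subset_rfl⟩,
      fun ⟨h1, h2⟩ S hS1 hS2 => le_antisymm (h2 ▸ sSup_le_sSup hS2) (h1 ▸ sSup_le_sSup hS1)⟩,
    ⟨?_, fun hT => ⟨S₁ ∪ (S₂ ∩ Set.Iic d), Set.subset_union_left,
      Set.union_subset h Set.inter_subset_left, hT⟩⟩⟩
  · rintro ⟨S, hS1, hS2, rfl⟩
    refine le_antisymm (sInf_le_sInf fun x hx => Or.inr ⟨hS2 hx, sInf_le hx⟩) (le_sInf ?_)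
    rintro x (hx | ⟨-, hx⟩)
    · exact sInf_le (hS1 hx)
    · exact hx
  · rintro ⟨S, hS1, hS2, rfl⟩
    refine le_antisymm (sSup_le ?_) (sSup_le_sSup fun x hx => Or.inr ⟨hS2 hx, le_sSup hx⟩)
    rintro x (hx | ⟨-, hx⟩)
    · exact le_sSup (hS1 hx)
    · exact hx
end

section
/- Let S₁ ⊆ S₂ be finite subsets of a type D and let n be a natural number. Then: (|S| = n for all finite S with S₁ ⊆ S ⊆ S₂) iff (|S₁| = n and |S₂| = n); and (|S| = n for some finite S with S₁ ⊆ S ⊆ S₂) iff (|S₁| ≤ n and n ≤ |S₂|), where |S| denotes the cardinality of S. -/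
/-- Characterization of the ultimate approximating aggregate of
the cardinality aggregate `Count`. -/
theorem stmt_14 {D : Type*} (S₁ S₂ : Finset D) (h : S₁ ⊆ S₂) (n : ℕ) :
    ((∀ S : Finset D, S₁ ⊆ S → S ⊆ S₂ → S.card = n) ↔ (S₁.card = n ∧ S₂.card = n)) ∧
    ((∃ S : Finset D, S₁ ⊆ S ∧ S ⊆ S₂ ∧ S.card = n) ↔ (S₁.card ≤ n ∧ n ≤ S₂.card)) := by
  constructor
  · constructor
    · intro hall
      exact ⟨hall S₁ (le_refl _) h, hall S₂ h (le_refl _)⟩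
    · rintro ⟨h1, h2⟩ S hS1 hS2
      have := Finset.card_le_card hS1
      have := Finset.card_le_card hS2
      omega
  · constructor
    · rintro ⟨S, hS1, hS2, rfl⟩
      exact ⟨Finset.card_le_card hS1, Finset.card_le_card hS2⟩
    · rintro ⟨h1, h2⟩
      exact Finset.exists_subsuperset_card_eq h h1 h2
end

section
/- Let S₁ ⊆ S₂ be finite subsets of a type α, let f : α → ℝ, and let d ∈ ℝ. Then: (1) (∑_{x∈S} f(x) = d for all S with S₁ ⊆ S ⊆ S₂) iff (∑_{x∈S₁} f(x) = d and f(x) = 0 for all x ∈ S₂ \ S₁); and (2) (∏_{x∈S} f(x) = d for all S with S₁ ⊆ S ⊆ S₂) iff (∏_{x∈S₁} f(x) = d and either d = 0 or f(x) = 1 for all x ∈ S₂ \ S₁). -/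
/-- Characterization of the first components of the ultimate
approximating aggregates of `Sum` and `Prod`. -/
theorem stmt_15 {α : Type*} [DecidableEq α] (S₁ S₂ : Finset α) (h : S₁ ⊆ S₂)
    (f : α → ℝ) (d : ℝ) :
    ((∀ S : Finset α, S₁ ⊆ S → S ⊆ S₂ → ∑ x ∈ S, f x = d) ↔
      ((∑ x ∈ S₁, f x = d) ∧ ∀ x ∈ S₂ \ S₁, f x = 0)) ∧
    ((∀ S : Finset α, S₁ ⊆ S → S ⊆ S₂ → ∏ x ∈ S, f x = d) ↔
      ((∏ x ∈ S₁, f x = d) ∧ (d = 0 ∨ ∀ x ∈ S₂ \ S₁, f x = 1))) := by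
  constructor
  · constructor
    · intro H
      have h1 : ∑ x ∈ S₁, f x = d := H S₁ le_rfl h
      refine ⟨h1, fun x hx => ?_⟩
      rw [Finset.mem_sdiff] at hx
      have h2 : ∑ y ∈ insert x S₁, f y = d :=
        H (insert x S₁) (Finset.subset_insert _ _) (Finset.insert_subset hx.1 h)
      rw [Finset.sum_insert hx.2, h1] at h2
      linarith
    · rintro ⟨h1, h2⟩ S hS1 hS2
      have : S = S₁ ∪ (S \ S₁) := by
        rw [Finset.union_sdiff_self_eq_union, Finset.union_eq_right.mpr hS1]
      rw [this, Finset.sum_union (Finset.disjoint_sdiff), h1,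
        Finset.sum_eq_zero (fun x hx => h2 x ?_), add_zero]
      rw [Finset.mem_sdiff] at hx ⊢
      exact ⟨hS2 hx.1, hx.2⟩
  · constructor
    · intro H
      have h1 : ∏ x ∈ S₁, f x = d := H S₁ le_rfl h
      refine ⟨h1, ?_⟩
      by_cases hd : d = 0
      · exact Or.inl hd
      · refine Or.inr fun x hx => ?_
        rw [Finset.mem_sdiff] at hx
        have h2 : ∏ y ∈ insert x S₁, f y = d :=
          H (insert x S₁) (Finset.subset_insert _ _) (Finset.insert_subset hx.1 h)
        rw [Finset.prod_insert hx.2, h1] at h2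
        field_simp at h2
        tauto
    · rintro ⟨h1, h2⟩ S hS1 hS2
      have hS : S = S₁ ∪ (S \ S₁) := by
        rw [Finset.union_sdiff_self_eq_union, Finset.union_eq_right.mpr hS1]
      rcases h2 with hd | h2
      · rw [hS, Finset.prod_union (Finset.disjoint_sdiff), h1, hd, zero_mul]

      · rw [hS, Finset.prod_union (Finset.disjoint_sdiff), h1,
          Finset.prod_eq_one (fun x hx => h2 x ?_), mul_one]
        rw [Finset.mem_sdiff] at hx ⊢
        exact ⟨hS2 hx.1, hx.2⟩
end

section
/- Let S₁ ⊆ S₂ be finite subsets of a type α and f : α → ℝ. For a finite set S write S⁺ = {x ∈ S | f(x) ≥ 0} and S⁻ = {x ∈ S | f(x) < 0}. Then S₁⁺ ∪ S₂⁻ and S₁⁻ ∪ S₂⁺ both lie between S₁ and S₂ (inclusive), and for every S with S₁ ⊆ S ⊆ S₂ it holds that ∑_{x ∈ S₁⁺ ∪ S₂⁻} f(x) ≤ ∑_{x ∈ S} f(x) ≤ ∑_{x ∈ S₁⁻ ∪ S₂⁺} f(x); that is, lmin_Sum(S₁,S₂) = S₁⁺ ∪ S₂⁻ and lmax_Sum(S₁,S₂)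 = S₁⁻ ∪ S₂⁺. -/
/-- `lmin_Sum(S₁,S₂) = S₁⁺ ∪ S₂⁻` and `lmax_Sum(S₁,S₂) = S₁⁻ ∪ S₂⁺`:
these sets lie in the interval `[S₁,S₂]` and minimize resp. maximize the sum. -/
theorem stmt_17 {α : Type*} [DecidableEq α] (S₁ S₂ : Finset α) (h : S₁ ⊆ S₂)
    (f : α → ℝ) :
    S₁ ⊆ (S₁.filter fun x => 0 ≤ f x) ∪ (S₂.filter fun x => f x < 0) ∧
    (S₁.filter fun x => 0 ≤ f x) ∪ (S₂.filter fun x => f x < 0) ⊆ S₂ ∧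
    S₁ ⊆ (S₁.filter fun x => f x < 0) ∪ (S₂.filter fun x => 0 ≤ f x) ∧
    (S₁.filter fun x => f x < 0) ∪ (S₂.filter fun x => 0 ≤ f x) ⊆ S₂ ∧
    (∀ S : Finset α, S₁ ⊆ S → S ⊆ S₂ →
      (∑ x ∈ (S₁.filter fun x => 0 ≤ f x) ∪ (S₂.filter fun x => f x < 0), f x)
        ≤ ∑ x ∈ S, f x ∧
      (∑ x ∈ S, f x)
        ≤ ∑ x ∈ (S₁.filter fun x => f x < 0) ∪ (S₂.filter fun x => 0 ≤ f x), f x) := by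
  have hsplit : ∀ S : Finset α, ∑ x ∈ S, f x =
      ∑ x ∈ S.filter (fun x => 0 ≤ f x), f x + ∑ x ∈ S.filter (fun x => f x < 0), f x := by
    intro S
    rw [← Finset.sum_filter_add_sum_filter_not S (fun x => 0 ≤ f x) f]
    congr 1
    apply Finset.sum_congr _ (fun _ _ => rfl)
    simp [Finset.filter_congr_decidable, not_le]
  have hdisj : ∀ A B : Finset α,
      Disjoint (A.filter fun x => 0 ≤ f x) (B.filter fun x => f x < 0) := by
    intro A B
    rw [Finset.disjoint_left]
    intro a ha hb
    simp only [Finset.mem_filter] at ha hb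
    linarith [ha.2, hb.2]
  refine ⟨?_, ?_, ?_, ?_, ?_⟩
  · intro x hx
    rcases le_or_gt 0 (f x) with hf | hf
    · exact Finset.mem_union_left _ (Finset.mem_filter.2 ⟨hx, hf⟩)
    · exact Finset.mem_union_right _ (Finset.mem_filter.2 ⟨h hx, hf⟩)
  · intro x hx
    rcases Finset.mem_union.1 hx with hx | hx
    · exact h (Finset.filter_subset _ _ hx)
    · exact Finset.filter_subset _ _ hx
  · intro x hx
    rcases lt_or_ge (f x) 0 with hf | hf
    · exact Finset.mem_union_left _ (Finset.mem_filter.2 ⟨hx, hf⟩)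
    · exact Finset.mem_union_right _ (Finset.mem_filter.2 ⟨h hx, hf⟩)
  · intro x hx
    rcases Finset.mem_union.1 hx with hx | hx
    · exact h (Finset.filter_subset _ _ hx)
    · exact Finset.filter_subset _ _ hx
  · intro S hS₁ hS₂
    have hpos : ∀ {A B : Finset α}, A ⊆ B →
        ∑ x ∈ A.filter (fun x => 0 ≤ f x), f x ≤ ∑ x ∈ B.filter (fun x => 0 ≤ f x), f x := by
      intro A B hAB
      apply Finset.sum_le_sum_of_subset_of_nonneg (Finset.filter_subset_filter _ hAB)
      intro i hi _
      exact (Finset.mem_filter.1 hi).2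
    have hneg : ∀ {A B : Finset α}, A ⊆ B →
        ∑ x ∈ B.filter (fun x => f x < 0), f x ≤ ∑ x ∈ A.filter (fun x => f x < 0), f x := by
      intro A B hAB
      have := Finset.sum_le_sum_of_subset_of_nonneg (f := fun x => -f x)
        (Finset.filter_subset_filter (fun x => f x < 0) hAB)
        (fun i hi _ => neg_nonneg.2 (Finset.mem_filter.1 hi).2.le)
      simpa using this
    constructor
    · rw [Finset.sum_union (hdisj _ _), hsplit S]
      exact add_le_add (hpos hS₁) (hneg hS₂)
    · rw [Finset.union_comm, Finset.sum_union (hdisj _ _), hsplit S]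
      exact add_le_add (hpos hS₂) (hneg hS₁)
end

section
/- Let S₁ ⊆ S₂ be finite subsets of a type α and f : α → ℝ with f(x) ≥ 0 for all x ∈ S₂. For a finite set S write S^{[1,∞)} = {x ∈ S | f(x) ≥ 1} and S^{[0,1)} = {x ∈ S | f(x) < 1}. Then S₁^{[1,∞)} ∪ S₂^{[0,1)} and S₁^{[0,1)} ∪ S₂^{[1,∞)} both lie between S₁ and S₂ (inclusive), and for every S with S₁ ⊆ S ⊆ S₂ it holds that ∏_{x ∈ S₁^{[1,∞)} ∪ S₂^{[0,1)}} f(x) ≤ ∏_{x ∈ S} f(x) ≤ ∏_{x ∈ S₁^{[0,1)} ∪ S₂^{[1,∞)}} f(x); that is, lmin_Prod(S₁,S₂) = S₁^{[1,∞)} ∪ S₂^{[0,1)} and lmax_Prod(S₁,S₂) = S₁^{[0,1)} ∪ S₂^{[1,∞)} for the product aggregate over non-negative reals. -/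
lemma aux_ge {α : Type*} [DecidableEq α] (T U : Finset α) (h : T ⊆ U) (f : α → ℝ)
    (h0 : ∀ x ∈ T, 0 ≤ f x) (h1 : ∀ x ∈ U, x ∉ T → 1 ≤ f x) :
    ∏ x ∈ T, f x ≤ ∏ x ∈ U, f x := by
  rw [← Finset.prod_sdiff h]
  have hT : 0 ≤ ∏ x ∈ T, f x := Finset.prod_nonneg h0
  have h1' : 1 ≤ ∏ x ∈ U \ T, f x := by
    calc (1:ℝ) = ∏ _x ∈ U \ T, (1:ℝ) := by simp
      _ ≤ ∏ x ∈ U \ T, f x := Finset.prod_le_prod (by intros; norm_num)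
          (fun x hx => by rw [Finset.mem_sdiff] at hx; exact h1 x hx.1 hx.2)
  exact le_mul_of_one_le_left hT h1'

lemma aux_le {α : Type*} [DecidableEq α] (T U : Finset α) (h : T ⊆ U) (f : α → ℝ)
    (h0 : ∀ x ∈ U, 0 ≤ f x) (h1 : ∀ x ∈ U, x ∉ T → f x ≤ 1) :
    ∏ x ∈ U, f x ≤ ∏ x ∈ T, f x := by
  rw [← Finset.prod_sdiff h]
  have hT : 0 ≤ ∏ x ∈ T, f x := Finset.prod_nonneg fun x hx => h0 x (h hx)
  have h1' : ∏ x ∈ U \ T, f x ≤ 1 := by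
    apply Finset.prod_le_one
    · intro x hx; exact h0 x (Finset.mem_sdiff.mp hx).1
    · intro x hx
      rw [Finset.mem_sdiff] at hx
      exact h1 x hx.1 hx.2
  exact mul_le_of_le_one_left hT h1'

/-- For the product aggregate over non-negative reals,
`lmin_Prod(S₁,S₂) = S₁^{[1,∞)} ∪ S₂^{[0,1)}` and
`lmax_Prod(S₁,S₂) = S₁^{[0,1)} ∪ S₂^{[1,∞)}`: these sets lie in the interval
`[S₁,S₂]` and minimize resp. maximize the product. -/
theorem stmt_18 {α : Type*} [DecidableEq α] (S₁ S₂ : Finset α) (h : S₁ ⊆ S₂)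
    (f : α → ℝ) (hf : ∀ x ∈ S₂, 0 ≤ f x) :
    S₁ ⊆ (S₁.filter fun x => 1 ≤ f x) ∪ (S₂.filter fun x => f x < 1) ∧
    (S₁.filter fun x => 1 ≤ f x) ∪ (S₂.filter fun x => f x < 1) ⊆ S₂ ∧
    S₁ ⊆ (S₁.filter fun x => f x < 1) ∪ (S₂.filter fun x => 1 ≤ f x) ∧
    (S₁.filter fun x => f x < 1) ∪ (S₂.filter fun x => 1 ≤ f x) ⊆ S₂ ∧
    (∀ S : Finset α, S₁ ⊆ S → S ⊆ S₂ →
      (∏ x ∈ (S₁.filter fun x => 1 ≤ f x) ∪ (S₂.filter fun x => f x < 1), f x)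
        ≤ ∏ x ∈ S, f x ∧
      (∏ x ∈ S, f x)
        ≤ ∏ x ∈ (S₁.filter fun x => f x < 1) ∪ (S₂.filter fun x => 1 ≤ f x), f x) := by
  have hdisj1 : Disjoint (S₁.filter fun x => 1 ≤ f x) (S₂.filter fun x => f x < 1) := by
    rw [Finset.disjoint_left]
    intro x hx hx'
    exact absurd (Finset.mem_filter.mp hx).2 (not_le.mpr (Finset.mem_filter.mp hx').2)
  have hdisj2 : Disjoint (S₁.filter fun x => f x < 1) (S₂.filter fun x => 1 ≤ f x) := by
    rw [Finset.disjoint_left]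
    intro x hx hx'
    exact absurd (Finset.mem_filter.mp hx').2 (not_le.mpr (Finset.mem_filter.mp hx).2)
  refine ⟨?_, ?_, ?_, ?_, ?_⟩
  · intro x hx
    rw [Finset.mem_union, Finset.mem_filter, Finset.mem_filter]
    rcases le_or_gt 1 (f x) with h1 | h1
    · exact Or.inl ⟨hx, h1⟩
    · exact Or.inr ⟨h hx, h1⟩
  · exact Finset.union_subset ((Finset.filter_subset _ _).trans h) (Finset.filter_subset _ _)
  · intro x hx
    rw [Finset.mem_union, Finset.mem_filter, Finset.mem_filter]
    rcases le_or_gt 1 (f x) with h1 | h1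
    · exact Or.inr ⟨h hx, h1⟩
    · exact Or.inl ⟨hx, h1⟩
  · exact Finset.union_subset ((Finset.filter_subset _ _).trans h) (Finset.filter_subset _ _)
  · intro S hS1 hS2
    have hsplit : ∏ x ∈ S, f x
        = (∏ x ∈ S.filter fun x => 1 ≤ f x, f x) * ∏ x ∈ S.filter fun x => f x < 1, f x := by
      rw [← Finset.prod_filter_mul_prod_filter_not S (fun x => 1 ≤ f x)]
      congr 1
      apply Finset.prod_congr _ (fun _ _ => rfl)
      apply Finset.filter_congr
      intro x _
      simp [not_le]
    constructor
    · rw [Finset.prod_union hdisj1, hsplit]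
      apply mul_le_mul
      · apply aux_ge _ _ (Finset.filter_subset_filter (fun x => 1 ≤ f x) hS1) f
        · intro x hx
          exact hf x (h (Finset.filter_subset _ _ hx))
        · intro x hx _
          exact (Finset.mem_filter.mp hx).2
      · apply aux_le _ _ (Finset.filter_subset_filter (fun x => f x < 1) hS2) f
        · intro x hx
          exact hf x (Finset.filter_subset _ _ hx)
        · intro x hx _
          exact le_of_lt (Finset.mem_filter.mp hx).2
      · exact Finset.prod_nonneg fun x hx => hf x (Finset.filter_subset _ _ hx)
      · exact Finset.prod_nonneg fun x hx => hf x (hS2 (Finset.filter_subset _ _ hx))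
    · rw [Finset.prod_union hdisj2, hsplit, mul_comm]
      apply mul_le_mul
      · apply aux_le _ _ (Finset.filter_subset_filter (fun x => f x < 1) hS1) f
        · intro x hx
          exact hf x (hS2 (Finset.filter_subset _ _ hx))
        · intro x hx _
          exact le_of_lt (Finset.mem_filter.mp hx).2
      · apply aux_ge _ _ (Finset.filter_subset_filter (fun x => 1 ≤ f x) hS2) f
        · intro x hx
          exact hf x (hS2 (Finset.filter_subset _ _ hx))
        · intro x hx _
          exact (Finset.mem_filter.mp hx).2
      · exact Finset.prod_nonneg fun x hx => hf x (hS2 (Finset.filter_subset _ _ hx))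
      · exact Finset.prod_nonneg fun x hx => hf x (h (Finset.filter_subset _ _ hx))
end

section
/- Let F be a function from finite subsets of a type D₁ to a linearly ordered set D₂, let S₁ ⊆ S₂ be finite subsets of D₁, and let m and M be finite sets with S₁ ⊆ m ⊆ S₂ and S₁ ⊆ M ⊆ S₂ such that F(m) ≤ F(S) and F(S) ≤ F(M) for every S with S₁ ⊆ S ⊆ S₂. Then for every d ∈ D₂: (F(S) = d for all S with S₁ ⊆ S ⊆ S₂) iff (F(m) = d and F(M) = d). In other words, the first component of the bound approximating aggregate bnd(F) coincides with the first component of the ultimate approximating aggregate ult(F) of the graph of F. -/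
/-- The first component of the bound approximating aggregate `bnd(F)`
coincides with the first component of the ultimate approximating aggregate of the
graph of `F`. -/
theorem stmt_19 {D₁ D₂ : Type*} [LinearOrder D₂] (F : Finset D₁ → D₂)
    (S₁ S₂ m M : Finset D₁) (h12 : S₁ ⊆ S₂)
    (hm1 : S₁ ⊆ m) (hm2 : m ⊆ S₂) (hM1 : S₁ ⊆ M) (hM2 : M ⊆ S₂)
    (hmin : ∀ S : Finset D₁, S₁ ⊆ S → S ⊆ S₂ → F m ≤ F S)
    (hmax : ∀ S : Finset D₁, S₁ ⊆ S → S ⊆ S₂ → F S ≤ F M) :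
    ∀ d : D₂,
      (∀ S : Finset D₁, S₁ ⊆ S → S ⊆ S₂ → F S = d) ↔ (F m = d ∧ F M = d) := by
  intro d
  constructor
  · intro h; exact ⟨h m hm1 hm2, h M hM1 hM2⟩
  · rintro ⟨hm, hM⟩ S hS1 hS2
    exact le_antisymm (hM ▸ hmax S hS1 hS2) (hm ▸ hmin S hS1 hS2)
end
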